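/- Let U be a smooth manifold, ζ a smooth vector field on U, and W ∈ G^ζ (i.e. a smooth one-form with W(ζ) > −1 everywhere). Define a one-form W⁰ pointwise by W⁰_p = W_p at points where W(ζ)(p) = 0, and W⁰_p = (ln(1 + W(ζ)(p)) / W(ζ)(p)) · W_p at points where W(ζ)(p) ≠ 0. Then W⁰ is a smooth one-form, and the one-parameter subgroup W(t)_p = f(W⁰(ζ)(p), t)·W⁰_p (with f(a,t) = (exp(at)−1)/a for a ≠ 0 and f(0,t) = t) satisfies W(1) = W. In particular, every element of G^ζ lies on a one-parameter subgroup of (G^ζ, ·). -/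

import Mathlib

/-!
Pointwise everything reduces to one real variable. With `a = W(ζ)` and `b = ln(1 + a)` the generator
is `W⁰ = (b/a)·W`, so `W⁰(ζ) = b` and `W(t)(ζ) = f(b,t)·b = e^{bt} - 1 > -1`. The group law is the
functional equation `f(b,s) + e^{bs}·f(b,t) = f(b,t+s)`, and `W(1) = f(b,1)·(b/a)·W = W` because
`e^b - 1 = a`. For smoothness, `f(·,t)` is the difference quotient at `0` of the entire function
`a ↦ e^{at}`, hence analytic, and `b/a = 1/f(b,1)` with `f(b,1) > 0`.
-/

open Bundle
open scoped Manifold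

section

variable {E : Type*} [NormedAddCommGroup E] [NormedSpace ℝ E]
  {H : Type*} [TopologicalSpace H] (I : ModelWithCorners ℝ E H)
  {M : Type*} [TopologicalSpace M] [ChartedSpace H M] [IsManifold I ((⊤ : ℕ∞) : WithTop ℕ∞) M]

/-- A vector field is smooth if it is a smooth section of the tangent bundle. -/
def IsSmoothVectorField (ζ : ∀ x : M, TangentSpace I x) : Prop :=
  ContMDiff I I.tangent (⊤ : ℕ∞) (fun x => (⟨x, ζ x⟩ : TangentBundle I M))

/-- A one-form is smooth if it is a smooth section of the bundle of continuous
linear maps from the tangent bundle to the trivial real line bundle. -/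
def IsSmoothOneForm (ω : ∀ x : M, TangentSpace I x →L[ℝ] ℝ) : Prop :=
  ContMDiff I (I.prod 𝓘(ℝ, E →L[ℝ] ℝ)) (⊤ : ℕ∞)
    (fun x => (⟨x, ω x⟩ : TotalSpace (E →L[ℝ] ℝ)
      (fun x ↦ TangentSpace I x →SL[RingHom.id ℝ] Bundle.Trivial M ℝ x)))

/-- The product `W²·W¹ := W² + (1 + W²(ζ))·W¹` of one-forms relative to the vector
field `ζ`. -/
noncomputable def oneFormMul (ζ : ∀ x : M, TangentSpace I x)
    (W2 W1 : ∀ x : M, TangentSpace I x →L[ℝ] ℝ) :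
    ∀ x : M, TangentSpace I x →L[ℝ] ℝ :=
  fun x => W2 x + (1 + W2 x (ζ x)) • W1 x

/-- The coefficient function `f(a, t) = (exp(at) − 1)/a` for `a ≠ 0`, `f(0, t) = t`. -/
noncomputable def ehlersCoeff (a t : ℝ) : ℝ :=
  if a = 0 then t else (Real.exp (a * t) - 1) / a

/-- The coefficient `ln(1 + a)/a` for `a ≠ 0`, and `1` for `a = 0`, used to produce
the infinitesimal generator `W⁰` of an element `W ∈ G^ζ`. -/
noncomputable def ehlersLogCoeff (a : ℝ) : ℝ :=
  if a = 0 then 1 else Real.log (1 + a) / a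

theorem AnalyticOnNhd.dslope {𝕜 F : Type*} [NontriviallyNormedField 𝕜] [NormedAddCommGroup F]
    [NormedSpace 𝕜 F] {f : 𝕜 → F} {s : Set 𝕜} {a : 𝕜} (hf : AnalyticOnNhd 𝕜 f s) (ha : a ∈ s) :
    AnalyticOnNhd 𝕜 (dslope f a) s := by
  intro b hb
  rcases eq_or_ne b a with rfl | hba
  · obtain ⟨p, hp⟩ := hf b hb
    exact hp.has_fpower_series_dslope_fslope.analyticAt
  · have hslope : AnalyticAt 𝕜 (fun c => (c - a)⁻¹ • (f c - f a)) b :=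
      ((analyticAt_id.sub analyticAt_const).inv (sub_ne_zero.2 hba)).smul
        ((hf b hb).sub analyticAt_const)
    exact hslope.congr (dslope_eventuallyEq_slope_of_ne f hba).symm

theorem ehlersCoeff_eq_dslope (t : ℝ) :
    (fun a => ehlersCoeff a t) = dslope (fun a => Real.exp (a * t)) 0 := by
  funext a
  rcases eq_or_ne a 0 with rfl | ha
  · have hderiv : HasDerivAt (fun a : ℝ => Real.exp (a * t)) t 0 := by
      simpa using ((hasDerivAt_id (0 : ℝ)).mul_const t).exp
    rw [ehlersCoeff, if_pos rfl, dslope_same, hderiv.deriv]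
  · rw [ehlersCoeff, if_neg ha, dslope_of_ne _ ha, slope_def_field]
    simp

theorem contDiff_ehlersCoeff {n : WithTop ℕ∞} (t : ℝ) :
    ContDiff ℝ n (fun a => ehlersCoeff a t) := by
  rw [ehlersCoeff_eq_dslope]
  have hexp : AnalyticOnNhd ℝ (fun a : ℝ => Real.exp (a * t)) Set.univ :=
    fun _ _ => analyticAt_rexp.comp (analyticAt_id.mul analyticAt_const)
  exact (hexp.dslope (Set.mem_univ 0)).contDiff

theorem ehlersCoeff_mul_self (a t : ℝ) : ehlersCoeff a t * a = Real.exp (a * t) - 1 := by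
  rcases eq_or_ne a 0 with rfl | ha
  · simp [ehlersCoeff]
  · rw [ehlersCoeff, if_neg ha, div_mul_cancel₀ _ ha]

theorem ehlersCoeff_add (a s t : ℝ) :
    ehlersCoeff a s + Real.exp (a * s) * ehlersCoeff a t = ehlersCoeff a (t + s) := by
  rcases eq_or_ne a 0 with rfl | ha
  · simp [ehlersCoeff, add_comm]
  · simp only [ehlersCoeff, if_neg ha]
    field_simp
    rw [mul_add, Real.exp_add]
    ring

theorem ehlersCoeff_one_pos (a : ℝ) : 0 < ehlersCoeff a 1 := by
  rcases eq_or_ne a 0 with rfl | ha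
  · simp [ehlersCoeff]
  · rw [ehlersCoeff, if_neg ha, mul_one]
    rcases ha.lt_or_gt with ha | ha
    · exact div_pos_of_neg_of_neg (by linarith [Real.exp_lt_one_iff.2 ha]) ha
    · exact div_pos (by linarith [Real.one_lt_exp_iff.2 ha]) ha

theorem ehlersLogCoeff_mul_self {a : ℝ} (ha : -1 < a) :
    ehlersLogCoeff a * a = Real.log (1 + a) := by
  rcases eq_or_ne a 0 with rfl | ha0
  · simp [ehlersLogCoeff]
  · rw [ehlersLogCoeff, if_neg ha0, div_mul_cancel₀ _ ha0]

theorem ehlersCoeff_log_one_add_mul_ehlersLogCoeff {a : ℝ} (ha : -1 < a) :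
    ehlersCoeff (Real.log (1 + a)) 1 * ehlersLogCoeff a = 1 := by
  rcases eq_or_ne a 0 with rfl | ha0
  · simp [ehlersCoeff, ehlersLogCoeff]
  · have hlog : Real.log (1 + a) ≠ 0 :=
      Real.log_ne_zero_of_pos_of_ne_one (by linarith) (by simpa using ha0)
    rw [ehlersCoeff, if_neg hlog, mul_one, Real.exp_log (by linarith), ehlersLogCoeff, if_neg ha0,
      add_sub_cancel_left, div_mul_div_cancel₀ hlog, div_self ha0]

theorem contDiffOn_ehlersLogCoeff {n : WithTop ℕ∞} :
    ContDiffOn ℝ n ehlersLogCoeff (Set.Ioi (-1)) := by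
  have hlog : ContDiffOn ℝ n (fun a => Real.log (1 + a)) (Set.Ioi (-1)) :=
    (contDiffOn_const.add contDiffOn_id).log fun a (ha : -1 < a) => by simp only [id]; linarith
  refine (((contDiff_ehlersCoeff 1).comp_contDiffOn hlog).inv
    fun a _ => (ehlersCoeff_one_pos _).ne').congr fun a (ha : -1 < a) => ?_
  exact eq_inv_of_mul_eq_one_right (ehlersCoeff_log_one_add_mul_ehlersLogCoeff ha)

section Covector

variable {F : Type*} [TopologicalSpace F] [AddCommMonoid F] [Module ℝ F] (V : F →L[ℝ] ℝ) (v : F)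

theorem ehlersCoeff_smul_apply_self (t : ℝ) :
    (ehlersCoeff (V v) t • V) v = Real.exp (V v * t) - 1 := by
  rw [smul_apply, smul_eq_mul, ehlersCoeff_mul_self]

theorem ehlersCoeff_smul_add_smul (s t : ℝ) :
    ehlersCoeff (V v) s • V + (1 + (ehlersCoeff (V v) s • V) v) • ehlersCoeff (V v) t • V
      = ehlersCoeff (V v) (t + s) • V := by
  rw [ehlersCoeff_smul_apply_self, add_sub_cancel, smul_smul, ← add_smul, ehlersCoeff_add]

theorem ehlersCoeff_one_smul_ehlersLogCoeff_smul (hV : -1 < V v) :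
    ehlersCoeff ((ehlersLogCoeff (V v) • V) v) 1 • ehlersLogCoeff (V v) • V = V := by
  rw [smul_apply, smul_eq_mul, ehlersLogCoeff_mul_self hV,
    smul_smul, ehlersCoeff_log_one_add_mul_ehlersLogCoeff hV, one_smul]

end Covector

section OneForm

variable {I}

theorem IsSmoothOneForm.smul {W : ∀ x : M, TangentSpace I x →L[ℝ] ℝ} (hW : IsSmoothOneForm I W)
    {c : M → ℝ} (hc : ContMDiff I 𝓘(ℝ, ℝ) (⊤ : ℕ∞) c) :
    IsSmoothOneForm I (fun x => c x • W x) :=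
  hc.smul_section hW

theorem IsSmoothOneForm.contMDiff_apply {W : ∀ x : M, TangentSpace I x →L[ℝ] ℝ}
    (hW : IsSmoothOneForm I W) {ζ : ∀ x : M, TangentSpace I x} (hζ : IsSmoothVectorField I ζ) :
    ContMDiff I 𝓘(ℝ, ℝ) (⊤ : ℕ∞) (fun x => W x (ζ x)) := fun x =>
  (contMDiffAt_totalSpace.1 (hW.clm_bundle_apply hζ x)).2

end OneForm

/-- **Every element of `G^ζ` lies on a one-parameter subgroup** (Section 3 of the
paper): for a smooth vector field `ζ` and `W ∈ G^ζ`, the one-form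
`W⁰ = (ln(1 + W(ζ))/W(ζ))·W` (equal to `W` where `W(ζ) = 0`) is smooth, and the
one-parameter subgroup `W(t) = f(W⁰(ζ), t)·W⁰` of `(G^ζ, ·)` satisfies `W(1) = W`. -/
theorem ehlers_mem_oneParameter_subgroup (ζ : ∀ x : M, TangentSpace I x)
    (hζ : IsSmoothVectorField I ζ)
    (W : ∀ x : M, TangentSpace I x →L[ℝ] ℝ) (hW : IsSmoothOneForm I W)
    (hWζ : ∀ x : M, -1 < W x (ζ x)) :
    -- `W⁰` is a smooth one-form
    IsSmoothOneForm I (fun x => ehlersLogCoeff (W x (ζ x)) • W x)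
    -- the curve `t ↦ W(t)` is a one-parameter subgroup of `(G^ζ, ·)` ...
    ∧ (∀ t : ℝ,
        IsSmoothOneForm I (fun x =>
          ehlersCoeff ((ehlersLogCoeff (W x (ζ x)) • W x) (ζ x)) t
            • (ehlersLogCoeff (W x (ζ x)) • W x))
        ∧ ∀ x : M, -1 <
            (ehlersCoeff ((ehlersLogCoeff (W x (ζ x)) • W x) (ζ x)) t
              • (ehlersLogCoeff (W x (ζ x)) • W x)) (ζ x))
    ∧ (∀ s t : ℝ,
        oneFormMul I ζ
            (fun x => ehlersCoeff ((ehlersLogCoeff (W x (ζ x)) • W x) (ζ x)) s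
              • (ehlersLogCoeff (W x (ζ x)) • W x))
            (fun x => ehlersCoeff ((ehlersLogCoeff (W x (ζ x)) • W x) (ζ x)) t
              • (ehlersLogCoeff (W x (ζ x)) • W x))
          = fun x => ehlersCoeff ((ehlersLogCoeff (W x (ζ x)) • W x) (ζ x)) (t + s)
              • (ehlersLogCoeff (W x (ζ x)) • W x))
    -- ... passing through `W` at `t = 1`
    ∧ (fun x => ehlersCoeff ((ehlersLogCoeff (W x (ζ x)) • W x) (ζ x)) 1
        • (ehlersLogCoeff (W x (ζ x)) • W x)) = W := by
  have hlogCoeff : ContMDiff I 𝓘(ℝ, ℝ) (⊤ : ℕ∞) (fun x => ehlersLogCoeff (W x (ζ x))) := fun x =>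
    (contDiffOn_ehlersLogCoeff.contDiffAt (Ioi_mem_nhds (hWζ x))).comp_contMDiffAt
      (f := fun x => W x (ζ x)) (hW.contMDiff_apply hζ x)
  have hW₀ : IsSmoothOneForm I (fun x => ehlersLogCoeff (W x (ζ x)) • W x) := hW.smul hlogCoeff
  refine ⟨hW₀, fun t => ⟨?_, fun x => ?_⟩, fun s t => funext fun x => ?_, funext fun x => ?_⟩
  · exact hW₀.smul ((contDiff_ehlersCoeff t).comp_contMDiff (hW₀.contMDiff_apply hζ))
  · rw [ehlersCoeff_smul_apply_self]
    linarith [Real.exp_pos ((ehlersLogCoeff (W x (ζ x)) • W x) (ζ x) * t)]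
  · exact ehlersCoeff_smul_add_smul _ _ s t
  · exact ehlersCoeff_one_smul_ehlersLogCoeff_smul _ _ (hWζ x)

end
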